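/- arXiv:math/0511680 — 3 statements merged into one kernel-verified Lean document; each statement's English description precedes it below -/
import Mathlib

section
/- Let M > 0 and let Theta = [0, a_1, a_2, ...] and Phi = [0, b_1, b_2, ...] in k((X^{-1})) have all partial quotients of degree at most M. If a_i = b_i for i = 1, ..., n but a_{n+1} != b_{n+1}, then |Theta - Phi| >= 1/(2^{2M} |q_n|^2), where q_n is the denominator of the n-th convergent of Theta. -/
open Polynomial Filter

noncomputable section
open scoped Classical

namespace Littlewood

variable (k : Type*) [Field k]

/-- The element `X` of `k((X⁻¹))`: the inverse of the Laurent-series variable `t = X⁻¹`. -/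
def XLS : LaurentSeries k := (HahnSeries.single (1 : ℤ) (1 : k))⁻¹

variable {k}

/-- Embedding of `k[X]` into `k((X⁻¹))`, sending the polynomial variable to `X`. -/
def emb (p : Polynomial k) : LaurentSeries k := Polynomial.aeval (XLS k) p

/-- The degree of a Laurent series in `X⁻¹`: if `F = ∑_{h ≥ -m} f_h X^{-h}` with
`f_{-m} ≠ 0` then `deg F = m`. -/
def deg (F : LaurentSeries k) : ℤ := -F.order

/-- The norm `|F| = 2 ^ deg F`, with `|0| = 0`. -/
def lnorm (F : LaurentSeries k) : ℝ := if F = 0 then 0 else (2 : ℝ) ^ (deg F)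

/-- Fractional part: the part of the series comprising only negative powers of `X`. -/
def frac (F : LaurentSeries k) : LaurentSeries k where
  coeff n := if 1 ≤ n then F.coeff n else 0
  isPWO_support' := F.isPWO_support'.mono (fun n hn => by
    simp only [Function.mem_support] at hn ⊢
    intro h
    exact hn (by simp [h]))

/-- `‖F‖`: the norm of the fractional part of `F`. -/
def fnorm (F : LaurentSeries k) : ℝ := lnorm (frac F)

/-- `F` is a rational function. -/
def IsRat (F : LaurentSeries k) : Prop :=
  ∃ p q : Polynomial k, q ≠ 0 ∧ F * emb q = emb p

/-- The polynomial part of a Laurent series (the part with nonnegative powers of `X`). -/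
def polyPart (F : LaurentSeries k) : Polynomial k :=
  ∑ i ∈ Finset.range ((-F.order).toNat + 1), Polynomial.C (F.coeff (-(i : ℤ))) * Polynomial.X ^ i

/-- The complete quotients of the continued fraction algorithm applied to `F`. -/
def cfRem (F : LaurentSeries k) : ℕ → LaurentSeries k
  | 0 => F
  | n + 1 => (cfRem F n - emb (polyPart (cfRem F n)))⁻¹

/-- The partial quotients of the continued fraction expansion of `F`. -/
def pq (F : LaurentSeries k) (n : ℕ) : Polynomial k := polyPart (cfRem F n)

/-- Denominators `q_n` of the convergents of the continued fraction with
partial quotients `a`. -/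
def den (a : ℕ → Polynomial k) : ℕ → Polynomial k
  | 0 => 1
  | 1 => a 1
  | n + 2 => a (n + 2) * den a (n + 1) + den a n

/-- Numerators `p_n` of the convergents. -/
def num (a : ℕ → Polynomial k) : ℕ → Polynomial k
  | 0 => a 0
  | 1 => a 1 * a 0 + 1
  | n + 2 => a (n + 2) * num a (n + 1) + num a n

/-- The value of a finite continued fraction `[b_0, b_1, …, b_m]` over `k[X]`. -/
def finCF : List (Polynomial k) → LaurentSeries k
  | [] => 0
  | [b] => emb b
  | b :: l => emb b + (finCF l)⁻¹

/-- `F` is badly approximable. -/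
def Bad (F : LaurentSeries k) : Prop :=
  ∃ c : ℝ, 0 < c ∧ ∀ q : Polynomial k, q ≠ 0 → c ≤ lnorm (emb q) * fnorm (emb q * F)


/-!
Let `θ_m, φ_m` be the complete quotients of `Θ, Φ` and `a_m, b_m` their partial quotients.
While `a_m = b_m`, the recursion `θ_m = a_m + θ_{m+1}⁻¹` gives
`θ_m - φ_m = θ_{m+1}⁻¹ - φ_{m+1}⁻¹`, hence `|θ_m - φ_m| |θ_{m+1}| |φ_{m+1}| = |θ_{m+1} - φ_{m+1}|`.
Telescoping from `m = 0` to `m = n` and using `|θ_m| = |a_m|` for `m ≥ 1` and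
`|q_n| = |a_1| ⋯ |a_n|` yields `|Θ - Φ| |q_n|² |a_{n+1}| |b_{n+1}| = |θ_{n+1} - φ_{n+1}|`.
The right-hand side is at least `1` because `θ_{n+1}` and `φ_{n+1}` have the distinct polynomial
parts `a_{n+1} ≠ b_{n+1}`, and `|a_{n+1}|, |b_{n+1}| ≤ 2 ^ M`.
-/

open Finset

lemma XLS_eq : XLS k = HahnSeries.single (-1 : ℤ) (1 : k) := by
  rw [XLS, inv_eq_iff_eq_inv]
  symm
  apply inv_eq_of_mul_eq_one_right
  rw [HahnSeries.single_mul_single]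
  norm_num

lemma algebraMap_laurentSeries (a : k) :
    algebraMap k (LaurentSeries k) a = HahnSeries.single 0 a := by
  rw [HahnSeries.algebraMap_apply', ← PowerSeries.C_eq_algebraMap, HahnSeries.ofPowerSeries_C,
    HahnSeries.C_apply]

@[simp]
lemma emb_one : emb (1 : k[X]) = 1 := map_one _

@[simp]
lemma emb_add (p q : k[X]) : emb (p + q) = emb p + emb q := map_add _ p q

@[simp]
lemma emb_mul (p q : k[X]) : emb (p * q) = emb p * emb q := map_mul _ p q

lemma emb_coeff (p : k[X]) (m : ℤ) :
    (emb p).coeff m = if m ≤ 0 then p.coeff (-m).toNat else 0 := by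
  induction p using Polynomial.induction_on' with
  | add f g hf hg =>
    rw [emb_add, HahnSeries.coeff_add, hf, hg]
    split <;> simp
  | monomial n a =>
    rw [emb, Polynomial.aeval_monomial, XLS_eq, HahnSeries.single_pow, algebraMap_laurentSeries,
      HahnSeries.single_mul_single, HahnSeries.coeff_single]
    simp only [one_pow, nsmul_eq_mul, mul_neg, mul_one, zero_add, Polynomial.coeff_monomial]
    by_cases h1 : m = -(n : ℤ)
    · subst h1
      simp
    · rw [if_neg h1]
      split_ifs <;> first | rfl | omega

lemma emb_coeff_neg (p : k[X]) (i : ℕ) : (emb p).coeff (-(i : ℤ)) = p.coeff i := by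
  simp [emb_coeff]

lemma emb_coeff_natDegree_ne_zero {p : k[X]} (hp : p ≠ 0) :
    (emb p).coeff (-(p.natDegree : ℤ)) ≠ 0 := by
  rwa [emb_coeff_neg, Polynomial.coeff_natDegree, Polynomial.leadingCoeff_ne_zero]

lemma emb_ne_zero {p : k[X]} (hp : p ≠ 0) : emb p ≠ 0 := fun h =>
  emb_coeff_natDegree_ne_zero hp (by rw [h, HahnSeries.coeff_zero])

lemma order_emb {p : k[X]} (hp : p ≠ 0) : (emb p).order = -(p.natDegree : ℤ) := by
  refine le_antisymm (HahnSeries.order_le_of_coeff_ne_zero (emb_coeff_natDegree_ne_zero hp)) ?_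
  rw [HahnSeries.le_order_iff_forall (emb_ne_zero hp)]
  intro m hm
  rw [emb_coeff, if_pos (by omega)]
  exact Polynomial.coeff_eq_zero_of_natDegree_lt (by omega)

lemma lnorm_of_ne_zero {F : LaurentSeries k} (hF : F ≠ 0) : lnorm F = 2 ^ (-F.order) := by
  rw [lnorm, if_neg hF, deg]

lemma lnorm_nonneg (F : LaurentSeries k) : 0 ≤ lnorm F := by
  unfold lnorm
  split <;> positivity

lemma lnorm_pos {F : LaurentSeries k} (hF : F ≠ 0) : 0 < lnorm F := by
  rw [lnorm_of_ne_zero hF]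
  positivity

lemma lnorm_emb {p : k[X]} (hp : p ≠ 0) : lnorm (emb p) = 2 ^ p.natDegree := by
  rw [lnorm_of_ne_zero (emb_ne_zero hp), order_emb hp, neg_neg, zpow_natCast]

lemma lnorm_emb_le_two_rpow {p : k[X]} {M : ℝ} (h : (p.natDegree : ℝ) ≤ M) :
    lnorm (emb p) ≤ 2 ^ M := by
  rcases eq_or_ne p 0 with rfl | hp
  · simp only [lnorm, emb, map_zero, if_pos]
    positivity
  rw [lnorm_emb hp, ← Real.rpow_natCast]
  exact Real.rpow_le_rpow_of_exponent_le one_le_two h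

lemma lnorm_mul (F G : LaurentSeries k) : lnorm (F * G) = lnorm F * lnorm G := by
  rcases eq_or_ne F 0 with rfl | hF
  · simp [lnorm]
  rcases eq_or_ne G 0 with rfl | hG
  · simp [lnorm]
  rw [lnorm_of_ne_zero hF, lnorm_of_ne_zero hG, lnorm_of_ne_zero (mul_ne_zero hF hG),
    HahnSeries.order_mul hF hG, neg_add, zpow_add₀ two_ne_zero]

lemma lnorm_inv (F : LaurentSeries k) : lnorm F⁻¹ = (lnorm F)⁻¹ := by
  rcases eq_or_ne F 0 with rfl | hF
  · simp [lnorm]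
  refine eq_inv_of_mul_eq_one_left ?_
  rw [← lnorm_mul, inv_mul_cancel₀ hF, lnorm_of_ne_zero one_ne_zero, HahnSeries.order_one]
  simp

lemma lnorm_neg (F : LaurentSeries k) : lnorm (-F) = lnorm F := by
  simp [lnorm, deg, HahnSeries.order_neg]

lemma lnorm_add_eq_left_of_lt {F G : LaurentSeries k} (h : lnorm G < lnorm F) :
    lnorm (F + G) = lnorm F := by
  have hF : F ≠ 0 := by
    rintro rfl
    exact (lnorm_nonneg G).not_gt (by simpa [lnorm] using h)
  rcases eq_or_ne G 0 with rfl | hG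
  · rw [add_zero]
  rw [lnorm_of_ne_zero hF, lnorm_of_ne_zero hG, zpow_lt_zpow_iff_right₀ one_lt_two] at h
  have htop : (F + G).orderTop = F.orderTop := HahnSeries.orderTop_add_eq_left (by
    rw [← HahnSeries.order_eq_orderTop_of_ne_zero hF, ← HahnSeries.order_eq_orderTop_of_ne_zero hG]
    exact WithTop.coe_lt_coe.2 (by omega))
  have hFG : F + G ≠ 0 := HahnSeries.orderTop_ne_top.1 (htop ▸ HahnSeries.orderTop_ne_top.2 hF)
  have horder : (F + G).order = F.order := by
    rw [← WithTop.coe_inj, HahnSeries.order_eq_orderTop_of_ne_zero hFG,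
      HahnSeries.order_eq_orderTop_of_ne_zero hF, htop]
  rw [lnorm_of_ne_zero hFG, lnorm_of_ne_zero hF, horder]

lemma lnorm_inv_sub_inv_mul {A B : LaurentSeries k} (hA : A ≠ 0) (hB : B ≠ 0) :
    lnorm (A⁻¹ - B⁻¹) * (lnorm A * lnorm B) = lnorm (A - B) := by
  have : (A⁻¹ - B⁻¹) * (A * B) = -(A - B) := by
    field_simp
    ring
  rw [← lnorm_mul, ← lnorm_mul, this, lnorm_neg]

lemma polyPart_coeff (F : LaurentSeries k) (i : ℕ) :
    (polyPart F).coeff i = F.coeff (-(i : ℤ)) := by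
  rw [polyPart, Polynomial.finsetSum_coeff]
  simp only [Polynomial.coeff_C_mul, Polynomial.coeff_X_pow, mul_ite, mul_one, mul_zero]
  rw [Finset.sum_ite_eq _ i]
  split_ifs with hi
  · rfl
  rcases eq_or_ne F 0 with rfl | hF
  · simp
  refine (HahnSeries.coeff_eq_zero_of_lt_order ?_).symm
  have := Int.self_le_toNat (-F.order)
  simp only [Finset.mem_range, not_lt] at hi
  omega

lemma polyPart_sub (F G : LaurentSeries k) : polyPart (F - G) = polyPart F - polyPart G := by
  ext i
  simp [polyPart_coeff]

lemma sub_emb_polyPart (F : LaurentSeries k) : F - emb (polyPart F) = frac F := by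
  ext m
  rw [HahnSeries.coeff_sub, emb_coeff]
  change _ = if 1 ≤ m then F.coeff m else 0
  split_ifs with h h'
  · omega
  · rw [polyPart_coeff, show -(((-m).toNat : ℕ) : ℤ) = m by omega, sub_self]
  · rw [sub_zero]
  · omega

lemma lnorm_frac_lt_one (F : LaurentSeries k) : lnorm (frac F) < 1 := by
  rcases eq_or_ne (frac F) 0 with h | h
  · rw [h, lnorm, if_pos rfl]
    exact one_pos
  have hord : 1 ≤ (frac F).order := by
    rw [HahnSeries.le_order_iff_forall h]
    intro m hm
    change (if 1 ≤ m then F.coeff m else 0) = 0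
    rw [if_neg (by omega)]
  rw [lnorm_of_ne_zero h]
  exact zpow_lt_one_of_neg₀ one_lt_two (by omega)

lemma one_le_lnorm_of_polyPart_ne_zero {F : LaurentSeries k} (h : polyPart F ≠ 0) :
    1 ≤ lnorm F := by
  have hi := Polynomial.leadingCoeff_ne_zero.2 h
  rw [Polynomial.leadingCoeff, polyPart_coeff] at hi
  have hF : F ≠ 0 := fun hF => hi (by rw [hF, HahnSeries.coeff_zero])
  have := HahnSeries.order_le_of_coeff_ne_zero hi
  rw [lnorm_of_ne_zero hF]
  exact one_le_zpow₀ one_le_two (by omega)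

lemma lnorm_emb_polyPart {F : LaurentSeries k} (h : 1 ≤ lnorm F) :
    lnorm (emb (polyPart F)) = lnorm F := by
  rw [← sub_sub_cancel F (emb (polyPart F)), sub_emb_polyPart, sub_eq_add_neg]
  exact lnorm_add_eq_left_of_lt (by rw [lnorm_neg]; exact (lnorm_frac_lt_one F).trans_le h)

lemma isRat_emb (p : k[X]) : IsRat (emb p) := ⟨p, 1, one_ne_zero, by simp⟩

lemma ne_zero_of_not_isRat {F : LaurentSeries k} (h : ¬ IsRat F) : F ≠ 0 := by
  rintro rfl
  exact h ⟨0, 1, one_ne_zero, by simp [emb]⟩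

lemma not_isRat_sub_emb {F : LaurentSeries k} (h : ¬ IsRat F) (p : k[X]) :
    ¬ IsRat (F - emb p) := by
  rintro ⟨r, q, hq, hrq⟩
  refine h ⟨r + p * q, q, hq, ?_⟩
  rw [emb_add, emb_mul, ← hrq]
  ring

lemma not_isRat_inv {F : LaurentSeries k} (h : ¬ IsRat F) : ¬ IsRat F⁻¹ := by
  rintro ⟨p, q, hq, hpq⟩
  have hF := ne_zero_of_not_isRat h
  have hp : p ≠ 0 := by
    rintro rfl
    simp only [emb, map_zero, mul_eq_zero, inv_eq_zero] at hpq
    exact hpq.elim hF (emb_ne_zero hq)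
  refine h ⟨q, p, hp, ?_⟩
  field_simp at hpq ⊢
  linear_combination -hpq

lemma cfRem_succ (F : LaurentSeries k) (m : ℕ) : cfRem F (m + 1) = (frac (cfRem F m))⁻¹ := by
  rw [cfRem, sub_emb_polyPart]

lemma not_isRat_cfRem {F : LaurentSeries k} (h : ¬ IsRat F) (m : ℕ) : ¬ IsRat (cfRem F m) := by
  induction m with
  | zero => exact h
  | succ m ih => exact not_isRat_inv (not_isRat_sub_emb ih _)

lemma cfRem_ne_zero {F : LaurentSeries k} (h : ¬ IsRat F) (m : ℕ) : cfRem F m ≠ 0 :=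
  ne_zero_of_not_isRat (not_isRat_cfRem h m)

lemma frac_cfRem_ne_zero {F : LaurentSeries k} (h : ¬ IsRat F) (m : ℕ) :
    frac (cfRem F m) ≠ 0 := by
  rw [← sub_emb_polyPart, sub_ne_zero]
  exact fun hc => not_isRat_cfRem h m (hc ▸ isRat_emb _)

lemma one_lt_lnorm_cfRem_succ {F : LaurentSeries k} (h : ¬ IsRat F) (m : ℕ) :
    1 < lnorm (cfRem F (m + 1)) := by
  rw [cfRem_succ, lnorm_inv]
  exact (one_lt_inv₀ (lnorm_pos (frac_cfRem_ne_zero h m))).2 (lnorm_frac_lt_one _)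

lemma lnorm_emb_pq_succ {F : LaurentSeries k} (h : ¬ IsRat F) (m : ℕ) :
    lnorm (emb (pq F (m + 1))) = lnorm (cfRem F (m + 1)) :=
  lnorm_emb_polyPart (one_lt_lnorm_cfRem_succ h m).le

lemma one_lt_lnorm_emb_pq_succ {F : LaurentSeries k} (h : ¬ IsRat F) (m : ℕ) :
    1 < lnorm (emb (pq F (m + 1))) :=
  lnorm_emb_pq_succ h m ▸ one_lt_lnorm_cfRem_succ h m

lemma lnorm_cfRem_sub_mul {F G : LaurentSeries k} (hF : ¬ IsRat F) (hG : ¬ IsRat G) {m : ℕ}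
    (hpq : pq F m = pq G m) :
    lnorm (cfRem F m - cfRem G m) * (lnorm (cfRem F (m + 1)) * lnorm (cfRem G (m + 1))) =
      lnorm (cfRem F (m + 1) - cfRem G (m + 1)) := by
  have hstep : cfRem F m - cfRem G m = (cfRem F (m + 1))⁻¹ - (cfRem G (m + 1))⁻¹ := by
    simp only [cfRem, inv_inv]
    rw [← pq, ← pq, hpq]
    ring
  rw [hstep, lnorm_inv_sub_inv_mul (cfRem_ne_zero hF _) (cfRem_ne_zero hG _)]

lemma lnorm_sub_mul_prod {F G : LaurentSeries k} (hF : ¬ IsRat F) (hG : ¬ IsRat G) {m : ℕ}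
    (hpq : ∀ i ≤ m, pq F i = pq G i) :
    lnorm (F - G) * ∏ j ∈ range (m + 1), (lnorm (cfRem F (j + 1)) * lnorm (cfRem G (j + 1))) =
      lnorm (cfRem F (m + 1) - cfRem G (m + 1)) := by
  induction m with
  | zero =>
    rw [zero_add, prod_range_one]
    exact lnorm_cfRem_sub_mul hF hG (hpq 0 le_rfl)
  | succ m ih =>
    rw [prod_range_succ, ← mul_assoc, ih fun i hi => hpq i (by omega),
      lnorm_cfRem_sub_mul hF hG (hpq _ le_rfl)]

lemma lnorm_emb_den (a : ℕ → k[X]) (ha : ∀ j, 1 < lnorm (emb (a (j + 1)))) (n : ℕ) :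
    lnorm (emb (den a n)) = ∏ j ∈ range n, lnorm (emb (a (j + 1))) := by
  induction n using Nat.twoStepInduction with
  | zero => simp [den, lnorm_of_ne_zero]
  | one => simp [den]
  | more n ih₀ ih₁ =>
    have hlead : lnorm (emb (a (n + 2) * den a (n + 1))) =
        ∏ j ∈ range (n + 2), lnorm (emb (a (j + 1))) := by
      rw [emb_mul, lnorm_mul, ih₁, prod_range_succ _ (n + 1), mul_comm]
    have hpos : 0 < ∏ j ∈ range n, lnorm (emb (a (j + 1))) :=
      prod_pos fun j _ => one_pos.trans (ha j)
    rw [den, emb_add, lnorm_add_eq_left_of_lt, hlead]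
    rw [hlead, ih₀, prod_range_succ, prod_range_succ, mul_assoc]
    exact lt_mul_of_one_lt_right hpos (one_lt_mul_of_lt_of_le (ha n) (ha (n + 1)).le)

theorem far_if_distinct_partial_quotient_general {k : Type*} [Field k] (M : ℝ)
    (Θ Φ : LaurentSeries k) (hΘ : ¬ IsRat Θ) (hΦ : ¬ IsRat Φ)
    (hΘ0 : pq Θ 0 = 0) (hΦ0 : pq Φ 0 = 0)
    (hΘM : ∀ i : ℕ, 1 ≤ i → ((pq Θ i).natDegree : ℝ) ≤ M)
    (hΦM : ∀ i : ℕ, 1 ≤ i → ((pq Φ i).natDegree : ℝ) ≤ M)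
    (n : ℕ) (h : ∀ i : ℕ, 1 ≤ i → i ≤ n → pq Θ i = pq Φ i)
    (hne : pq Θ (n + 1) ≠ pq Φ (n + 1)) :
    1 / ((2 : ℝ) ^ (2 * M) * lnorm (emb (den (pq Θ) n)) ^ 2) ≤ lnorm (Θ - Φ) := by
  have hpq : ∀ i ≤ n, pq Θ i = pq Φ i := fun i hi => by
    rcases i.eq_zero_or_pos with rfl | hi₀
    · rw [hΘ0, hΦ0]
    · exact h i hi₀ hi
  have htel := lnorm_sub_mul_prod hΘ hΦ hpq
  simp only [← lnorm_emb_pq_succ hΘ, ← lnorm_emb_pq_succ hΦ] at htel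
  have hden : lnorm (emb (den (pq Θ) n)) ^ 2 =
      ∏ j ∈ range n, (lnorm (emb (pq Θ (j + 1))) * lnorm (emb (pq Φ (j + 1)))) := by
    rw [lnorm_emb_den _ (one_lt_lnorm_emb_pq_succ hΘ), sq, ← prod_mul_distrib]
    exact prod_congr rfl fun j hj => by rw [h (j + 1) (by omega) (by simpa using hj)]
  have hfar : 1 ≤ lnorm (cfRem Θ (n + 1) - cfRem Φ (n + 1)) :=
    one_le_lnorm_of_polyPart_ne_zero (by rwa [polyPart_sub, sub_ne_zero])
  have hbound : lnorm (emb (pq Θ (n + 1))) * lnorm (emb (pq Φ (n + 1))) ≤ 2 ^ (2 * M) := by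
    rw [two_mul, Real.rpow_add two_pos]
    exact mul_le_mul (lnorm_emb_le_two_rpow (hΘM _ le_add_self))
      (lnorm_emb_le_two_rpow (hΦM _ le_add_self)) (lnorm_nonneg _) (by positivity)
  have hq : 0 < lnorm (emb (den (pq Θ) n)) ^ 2 := hden ▸ prod_pos fun j _ =>
    mul_pos (one_pos.trans (one_lt_lnorm_emb_pq_succ hΘ j))
      (one_pos.trans (one_lt_lnorm_emb_pq_succ hΦ j))
  rw [div_le_iff₀ (by positivity)]
  calc 1 ≤ lnorm (cfRem Θ (n + 1) - cfRem Φ (n + 1)) := hfar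
    _ = lnorm (Θ - Φ) * (lnorm (emb (den (pq Θ) n)) ^ 2 *
          (lnorm (emb (pq Θ (n + 1))) * lnorm (emb (pq Φ (n + 1))))) := by
      rw [← htel, prod_range_succ, hden]
    _ ≤ lnorm (Θ - Φ) * (2 ^ (2 * M) * lnorm (emb (den (pq Θ) n)) ^ 2) := by
      rw [mul_comm (2 ^ (2 * M) : ℝ)]
      gcongr
      exact lnorm_nonneg _

theorem far_if_distinct_partial_quotient {k : Type*} [Field k] (M : ℝ) (hM : 0 < M)
    (Θ Φ : LaurentSeries k) (hΘ : ¬ IsRat Θ) (hΦ : ¬ IsRat Φ)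
    (hΘ0 : pq Θ 0 = 0) (hΦ0 : pq Φ 0 = 0)
    (hΘM : ∀ i : ℕ, 1 ≤ i → ((pq Θ i).natDegree : ℝ) ≤ M)
    (hΦM : ∀ i : ℕ, 1 ≤ i → ((pq Φ i).natDegree : ℝ) ≤ M)
    (n : ℕ) (h : ∀ i : ℕ, 1 ≤ i → i ≤ n → pq Θ i = pq Φ i)
    (hne : pq Θ (n + 1) ≠ pq Φ (n + 1)) :
    1 / ((2 : ℝ) ^ (2 * M) * lnorm (emb (den (pq Θ) n)) ^ 2) ≤ lnorm (Θ - Φ) :=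
  far_if_distinct_partial_quotient_general M Θ Φ hΘ hΦ hΘ0 hΦ0 hΘM hΦM n h hne

end Littlewood
end
end

section
/- Let p be a prime and Theta_p in F_p((X^{-1})) the power series with continued fraction expansion [0, X, X^p, X^{p^2}, X^{p^3}, ...]. Then Theta_p is a root of the polynomial Z^{p+1} + X Z - 1. -/
open Polynomial Filter

noncomputable section
open scoped Classical

namespace Littlewood

variable (k : Type*) [Field k]

variable {k}

/-!
The complete quotients `G n = cfRem Θ (n + 1)` satisfy `G n = X ^ p ^ n + 1 / G (n + 1)`.
Applying Frobenius gives `G n ^ p = X ^ p ^ (n + 1) + 1 / G (n + 1) ^ p`, so the defect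
`D n = G (n + 1) - G n ^ p` equals `1 / G (n + 2) - 1 / G (n + 1) ^ p`, that is
`D n * G (n + 2) * G (n + 1) ^ p = -D (n + 1)`. As all complete quotients have positive degree,
if `D 0 ≠ 0` then the orders (in `X⁻¹`) of the `D n` would form a strictly decreasing sequence
of nonnegative integers. Hence `G 1 = G 0 ^ p = Θ⁻ᵖ`, and `1 / Θ = X + 1 / G 1 = X + Θ ^ p`.
-/

lemma coeff_polyPart (F : LaurentSeries k) (j : ℕ) :
    (polyPart F).coeff j = if j ≤ (-F.order).toNat then F.coeff (-(j : ℤ)) else 0 := by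
  simp only [polyPart, Polynomial.finsetSum_coeff, Polynomial.coeff_C_mul, Polynomial.coeff_X_pow,
    mul_ite, mul_one, mul_zero, Finset.sum_ite_eq, Finset.mem_range, Nat.lt_succ_iff]

lemma order_eq_of_polyPart_eq_X_pow {F : LaurentSeries k} {m : ℕ}
    (hF : polyPart F = Polynomial.X ^ m) : F.order = -(m : ℤ) := by
  have hcoeff : ∀ j : ℕ, (polyPart F).coeff j = if j = m then 1 else 0 := by
    simp [hF, Polynomial.coeff_X_pow]
  have hm : F.coeff (-(m : ℤ)) ≠ 0 := by
    have := hcoeff m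
    rw [coeff_polyPart] at this
    split_ifs at this <;> simp_all
  refine le_antisymm (HahnSeries.order_le_of_coeff_ne_zero hm) (not_lt.mp fun hlt => ?_)
  -- otherwise the leading coefficient of `F` would show up in `polyPart F` above degree `m`
  set N := (-F.order).toNat
  have hN : (N : ℤ) = -F.order := Int.toNat_of_nonneg (by omega)
  have := hcoeff N
  rw [coeff_polyPart, if_pos le_rfl, if_neg (by omega), show -(N : ℤ) = F.order by omega,
    HahnSeries.coeff_order_eq_zero] at this
  exact HahnSeries.ne_zero_of_coeff_ne_zero hm this

lemma cfRem_succ_inv (F : LaurentSeries k) (n : ℕ) :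
    (cfRem F (n + 1))⁻¹ = cfRem F n - emb (pq F n) :=
  inv_inv _

lemma emb_X_pow_pow_succ (p n : ℕ) :
    emb (Polynomial.X ^ p ^ (n + 1) : Polynomial k) = emb (Polynomial.X ^ p ^ n) ^ p := by
  rw [emb, emb, ← map_pow, ← pow_mul, pow_succ]

lemma not_strictAnti_of_nonneg {x : ℕ → ℤ} (hx : ∀ n, 0 ≤ x n) : ¬ StrictAnti x := fun hanti =>
  not_strictAnti_of_wellFoundedLT (fun n => (x n).toNat) fun m n hmn => by
    have := hanti hmn
    have := hx n
    simp only
    omega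

section Frobenius

variable {p : ℕ} {G a : ℕ → LaurentSeries k}

variable (p) in
def frobDefect (G : ℕ → LaurentSeries k) (n : ℕ) : LaurentSeries k := G (n + 1) - G n ^ p

lemma min_order_le_order_frobDefect (n : ℕ) (hD : frobDefect p G n ≠ 0) :
    min (G (n + 1)).order (p * (G n).order) ≤ (frobDefect p G n).order := by
  rw [frobDefect, sub_eq_add_neg] at hD ⊢
  simpa only [HahnSeries.order_neg, HahnSeries.order_pow, nsmul_eq_mul]
    using HahnSeries.min_order_le_order_add hD

variable [ExpChar k p]

lemma frobDefect_mul (hG : ∀ n, G n = a n + (G (n + 1))⁻¹) (ha : ∀ n, a (n + 1) = a n ^ p)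
    (hne : ∀ n, G n ≠ 0) (n : ℕ) :
    frobDefect p G n * (G (n + 2) * G (n + 1) ^ p) = -frobDefect p G (n + 1) := by
  have : ExpChar (LaurentSeries k) p := expChar_of_injective_ringHom HahnSeries.C_injective p
  have hfrob : G n ^ p = a (n + 1) + (G (n + 1) ^ p)⁻¹ := by
    rw [hG n, add_pow_expChar, ha, inv_pow]
  have hdefect : frobDefect p G n = (G (n + 2))⁻¹ - (G (n + 1) ^ p)⁻¹ := by
    rw [frobDefect]
    linear_combination hG (n + 1) - hfrob
  have := hne (n + 2)
  have := pow_ne_zero p (hne (n + 1))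
  rw [hdefect, frobDefect]
  field_simp
  ring

lemma order_frobDefect_succ (hG : ∀ n, G n = a n + (G (n + 1))⁻¹) (ha : ∀ n, a (n + 1) = a n ^ p)
    (hne : ∀ n, G n ≠ 0) (n : ℕ) (hD : frobDefect p G n ≠ 0) :
    (frobDefect p G n).order + ((G (n + 2)).order + p * (G (n + 1)).order)
      = (frobDefect p G (n + 1)).order := by
  rw [← HahnSeries.order_neg (f := frobDefect p G (n + 1)), ← frobDefect_mul hG ha hne,
    HahnSeries.order_mul hD (mul_ne_zero (hne _) (pow_ne_zero _ (hne _))),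
    HahnSeries.order_mul (hne _) (pow_ne_zero _ (hne _)), HahnSeries.order_pow, nsmul_eq_mul]

/-- Here `(G n).order < 0` says that every complete quotient has positive degree in `X`. -/
theorem succ_eq_pow_of_frobenius (hG : ∀ n, G n = a n + (G (n + 1))⁻¹)
    (ha : ∀ n, a (n + 1) = a n ^ p) (hord : ∀ n, (G n).order < 0) : G 1 = G 0 ^ p := by
  have hne : ∀ n, G n ≠ 0 := fun n h => by simpa [h] using hord n
  have hp : 0 < p := expChar_pos k p
  by_contra h1
  have hDne : ∀ n, frobDefect p G n ≠ 0 := by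
    intro n
    induction n with
    | zero => exact sub_ne_zero.mpr h1
    | succ n ih =>
      rw [Ne, ← neg_eq_zero, ← frobDefect_mul hG ha hne n]
      exact mul_ne_zero ih (mul_ne_zero (hne _) (pow_ne_zero _ (hne _)))
  have hneg : ∀ n, (p : ℤ) * (G n).order < 0 := fun n => mul_neg_of_pos_of_neg (by omega) (hord n)
  refine not_strictAnti_of_nonneg (x := fun n => (frobDefect p G n).order) (fun n => ?_)
    (strictAnti_nat_of_succ_lt fun n => ?_)
  all_goals
    have hstep := order_frobDefect_succ hG ha hne n (hDne n)
    have := hord (n + 2)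
    have := hneg (n + 1)
  · have hlow : min (G (n + 2)).order (p * (G (n + 1)).order) ≤ (frobDefect p G (n + 1)).order :=
      min_order_le_order_frobDefect (n + 1) (hDne (n + 1))
    rcases min_choice (G (n + 2)).order (p * (G (n + 1)).order) with h | h <;> omega
  · omega

end Frobenius

theorem mahler_example_algebraic_general (p : ℕ) [Fact p.Prime] (Θ : LaurentSeries (ZMod p))
    (h0 : pq Θ 0 = 0)
    (h : ∀ n : ℕ, pq Θ (n + 1) = Polynomial.X ^ p ^ n) :
    Θ ^ (p + 1) + emb (Polynomial.X : Polynomial (ZMod p)) * Θ - 1 = 0 := by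
  set G : ℕ → LaurentSeries (ZMod p) := fun n => cfRem Θ (n + 1)
  have hG0 : G 0 = Θ⁻¹ := by
    rw [← inv_inv (G 0), cfRem_succ_inv, h0, emb, map_zero, sub_zero]
    rfl
  have hrec : ∀ n, G n = emb (Polynomial.X ^ p ^ n) + (G (n + 1))⁻¹ := fun n => by
    rw [cfRem_succ_inv, h, add_sub_cancel]
  have hord : ∀ n, (G n).order < 0 := fun n => by
    have := (Fact.out : p.Prime).pos
    rw [order_eq_of_polyPart_eq_X_pow (h n)]
    simp only [Left.neg_neg_iff, Nat.cast_pos]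
    positivity
  have hfrob : G 1 = G 0 ^ p := succ_eq_pow_of_frobenius hrec (emb_X_pow_pow_succ p) hord
  have hΘ : Θ⁻¹ = emb Polynomial.X + Θ ^ p := by
    rw [← hG0, hrec 0, hfrob, hG0, inv_pow, inv_inv, pow_zero, pow_one]
  have hΘne : Θ ≠ 0 := by
    rintro rfl
    simpa [hG0] using hord 0
  calc Θ ^ (p + 1) + emb Polynomial.X * Θ - 1 = Θ * (emb Polynomial.X + Θ ^ p) - 1 := by ring
    _ = 0 := by rw [← hΘ, mul_inv_cancel₀ hΘne, sub_self]

theorem mahler_example_algebraic (p : ℕ) [Fact p.Prime] (Θ : LaurentSeries (ZMod p))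
    (hΘ : ¬ IsRat Θ) (h0 : pq Θ 0 = 0)
    (h : ∀ n : ℕ, pq Θ (n + 1) = Polynomial.X ^ p ^ n) :
    Θ ^ (p + 1) + emb (Polynomial.X : Polynomial (ZMod p)) * Θ - 1 = 0 :=
  mahler_example_algebraic_general p Θ h0 h

end Littlewood
end
end

section
/- For every positive integer n set u_n = (k+2) 3^n - 2 for a fixed non-negative integer k, U_n = H_0(X) H_1(-X) ... H_{n-2}(X) (-X+1) and V_n = (-X)^{[u_{n-1}]} (-X+1)(X+1) X^{[u_n]} (X+1)(-X+1) (-X)^{[u_{n-1}]} (for even n), where H_j(Y) = (Y+1) Y^{[u_j]} (Y+1). Then V_n is a palindrome, |U_n| = ((k+2)/2) 3^{n-1} - k/2, |V_n| = 5(k+2) 3^{n-1} - 2, and |V_n| >= 3|U_n| + 3 for all even n >= 2. -/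
noncomputable section

namespace Littlewood

/-- `u_n = (k+2) 3^n - 2`. -/
def u (k n : ℕ) : ℕ := (k + 2) * 3 ^ n - 2

/-- `H_j(Y) = (Y+1) Y^{[u_j]} (Y+1)`, a word over `F₃[X] \ F₃`. -/
def Hw (k j : ℕ) (Y : Polynomial (ZMod 3)) : List (Polynomial (ZMod 3)) :=
  [Y + 1] ++ List.replicate (u k j) Y ++ [Y + 1]

/-- `U_n = H_0(X) H_1(-X) ⋯ H_{n-2}((-1)^{n-2} X) (-X+1)`. -/
def Uw (k n : ℕ) : List (Polynomial (ZMod 3)) :=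
  ((List.range (n - 1)).map
      (fun j => Hw k j ((-1 : Polynomial (ZMod 3)) ^ j * Polynomial.X))).flatten
    ++ [-Polynomial.X + 1]

/-- `V_n = (-X)^{[u_{n-1}]} (-X+1)(X+1) X^{[u_n]} (X+1)(-X+1) (-X)^{[u_{n-1}]}`. -/
def Vw (k n : ℕ) : List (Polynomial (ZMod 3)) :=
  List.replicate (u k (n - 1)) (-Polynomial.X)
    ++ [-Polynomial.X + 1, Polynomial.X + 1]
    ++ List.replicate (u k n) Polynomial.X
    ++ [Polynomial.X + 1, -Polynomial.X + 1]
    ++ List.replicate (u k (n - 1)) (-Polynomial.X)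

lemma u_add_two (k n : ℕ) : u k n + 2 = (k + 2) * 3 ^ n := by
  have : 2 ≤ (k + 2) * 3 ^ n := le_mul_of_le_of_one_le (by omega) (Nat.one_le_pow _ _ (by norm_num))
  unfold u
  omega

lemma length_Hw (k j : ℕ) (Y : Polynomial (ZMod 3)) : (Hw k j Y).length = (k + 2) * 3 ^ j := by
  simp only [Hw, List.length_append, List.length_replicate, List.length_singleton]
  linarith [u_add_two k j]

lemma two_mul_length_flatten_Hw_add (k m : ℕ) (Y : ℕ → Polynomial (ZMod 3)) :
    2 * ((List.range m).map fun j => Hw k j (Y j)).flatten.length + (k + 2) = (k + 2) * 3 ^ m := by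
  induction m with
  | zero => simp
  | succ m ih =>
    simp only [List.range_succ, List.map_append, List.flatten_append, List.length_append,
      List.map_singleton, List.flatten_singleton, length_Hw] at ih ⊢
    rw [pow_succ]
    linarith

lemma two_mul_length_Uw_add (k n : ℕ) : 2 * (Uw k n).length + k = (k + 2) * 3 ^ (n - 1) := by
  have := two_mul_length_flatten_Hw_add k (n - 1) fun j => (-1) ^ j * Polynomial.X
  simp only [Uw, List.length_append, List.length_singleton]
  omega

lemma length_Vw_add_two (k n : ℕ) (hn : 1 ≤ n) :
    (Vw k n).length + 2 = 5 * ((k + 2) * 3 ^ (n - 1)) := by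
  obtain ⟨m, rfl⟩ := Nat.exists_eq_add_of_le' hn
  have h₁ := u_add_two k m
  have h₂ := u_add_two k (m + 1)
  simp only [Vw, List.length_append, List.length_replicate, List.length_cons, List.length_nil,
    Nat.add_sub_cancel] at h₂ ⊢
  rw [pow_succ] at h₂
  linarith

lemma reverse_Vw (k n : ℕ) : (Vw k n).reverse = Vw k n := by
  simp [Vw]

theorem lasjaunias_words_general (k n : ℕ) (hn : 2 ≤ n) :
    (Vw k n).reverse = Vw k n ∧
      2 * ((Uw k n).length : ℤ) = (k + 2) * 3 ^ (n - 1) - k ∧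
      ((Vw k n).length : ℤ) = 5 * (k + 2) * 3 ^ (n - 1) - 2 ∧
      3 * (Uw k n).length + 3 ≤ (Vw k n).length := by
  have hU := two_mul_length_Uw_add k n
  have hV := length_Vw_add_two k n (by omega)
  have hpos : k + 2 ≤ (k + 2) * 3 ^ (n - 1) := Nat.le_mul_of_pos_right _ (by positivity)
  refine ⟨reverse_Vw k n, ?_, ?_, by omega⟩
  · have := congrArg (Nat.cast : ℕ → ℤ) hU
    push_cast at this
    linarith
  · have := congrArg (Nat.cast : ℕ → ℤ) hV
    push_cast at this
    linarith

/-- For every even `n ≥ 2`: `V_n` is a palindrome,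
`|U_n| = ((k+2)/2) 3^{n-1} - k/2`, `|V_n| = 5(k+2) 3^{n-1} - 2`, and
`|V_n| ≥ 3 |U_n| + 3`. -/
theorem lasjaunias_words (k n : ℕ) (hn : 2 ≤ n) (heven : Even n) :
    (Vw k n).reverse = Vw k n ∧
      2 * ((Uw k n).length : ℤ) = (k + 2) * 3 ^ (n - 1) - k ∧
      ((Vw k n).length : ℤ) = 5 * (k + 2) * 3 ^ (n - 1) - 2 ∧
      3 * (Uw k n).length + 3 ≤ (Vw k n).length :=
  lasjaunias_words_general k n hn

end Littlewood
end
end
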